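/- Robustness inequality (Section 4.2 and Supplementary C.3): Assume (A1)–(A3), (A5), (A6), the MSM, and either (A4.1) or (A4.2). Then |θ_rsw^(m) − θ^(K)| ≥ |θ_sw^(m) − θ^(K)|; that is, the limit of the SW estimator is at least as close to the effect of the entire treatment history as the limit of the RSW estimator. -/

import Mathlib

open MeasureTheory Finset
open scoped Classical

namespace MSMPaper

noncomputable section

variable {Ω : Type*} [MeasurableSpace Ω] {𝓛 : Type*}

/-- Conditional probability `P(E | F) = P(E ∩ F) / P(F)` as a real number
(junk value `0` when `P F = 0`). -/
def cP (P : Measure Ω) (E F : Set Ω) : ℝ := (P (E ∩ F)).toReal / (P F).toReal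

variable {K : ℕ}

/-- Event `Ā(t−1) = b̄` (treatment history up to, not including, time `t`). -/
def Apast (A : Fin K → Ω → Bool) (t : ℕ) (b : Fin K → Bool) : Set Ω :=
  {ω | ∀ k : Fin K, (k : ℕ) < t → A k ω = b k}

/-- Event `L̄(t) = l̄` (covariate history up to and including time `t`). -/
def Lpast (L : Fin K → Ω → 𝓛) (t : ℕ) (l : Fin K → 𝓛) : Set Ω :=
  {ω | ∀ k : Fin K, (k : ℕ) ≤ t → L k ω = l k}

/-- Event `A̲(s, t−1) = b` (treatment history from time `s` up to, not including, `t`). -/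
def Aseg (A : Fin K → Ω → Bool) (s t : ℕ) (b : Fin K → Bool) : Set Ω :=
  {ω | ∀ k : Fin K, s ≤ (k : ℕ) → (k : ℕ) < t → A k ω = b k}

/-- Event `A̲(K−m) = a̲` for a (last-`m`) treatment vector `as`. -/
def EtrV (A : Fin K → Ω → Bool) (m : ℕ) (as : Fin K → Bool) : Set Ω :=
  {ω | ∀ k : Fin K, K - m ≤ (k : ℕ) → A k ω = as k}

/-- Event `A̲(K−m) = a_m` (constant `a` on the last `m` coordinates). -/
def Etr (A : Fin K → Ω → Bool) (m : ℕ) (a : Bool) : Set Ω :=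
  EtrV A m (fun _ => a)

/-- Stabilized weights `W_sw`. -/
def Wsw (P : Measure Ω) (A : Fin K → Ω → Bool) (L : Fin K → Ω → 𝓛) : Ω → ℝ :=
  fun ω => ∏ k : Fin K,
    cP P {ω' | A k ω' = A k ω} (Apast A (k : ℕ) (fun j => A j ω)) /
      cP P {ω' | A k ω' = A k ω}
        (Lpast L (k : ℕ) (fun j => L j ω) ∩ Apast A (k : ℕ) (fun j => A j ω))

/-- Restricted stabilized weights `W_rsw^(m)`. -/
def Wrsw (P : Measure Ω) (A : Fin K → Ω → Bool) (L : Fin K → Ω → 𝓛) (m : ℕ) : Ω → ℝ :=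
  fun ω => ∏ k ∈ Finset.univ.filter (fun k : Fin K => K - m ≤ (k : ℕ)),
    cP P {ω' | A k ω' = A k ω} (Aseg A (K - m) (k : ℕ) (fun j => A j ω)) /
      cP P {ω' | A k ω' = A k ω}
        (Lpast L (k : ℕ) (fun j => L j ω) ∩ Apast A (k : ℕ) (fun j => A j ω))

/-- Partial stabilized weights `W_psw^(m)`. -/
def Wpsw (P : Measure Ω) (A : Fin K → Ω → Bool) (L : Fin K → Ω → 𝓛) (m : ℕ) : Ω → ℝ :=
  fun ω => ∏ k ∈ Finset.univ.filter (fun k : Fin K => K - m ≤ (k : ℕ)),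
    cP P {ω' | A k ω' = A k ω} (Apast A (k : ℕ) (fun j => A j ω)) /
      cP P {ω' | A k ω' = A k ω}
        (Lpast L (k : ℕ) (fun j => L j ω) ∩ Apast A (k : ℕ) (fun j => A j ω))

/-- IP-weighted contrast `θ_W^(m)`. -/
def θW (P : Measure Ω) (A : Fin K → Ω → Bool) (m : ℕ) (W Y : Ω → ℝ) : ℝ :=
  (∫ ω in Etr A m true, W ω * Y ω ∂P) / (∫ ω in Etr A m true, W ω ∂P) -
    (∫ ω in Etr A m false, W ω * Y ω ∂P) / (∫ ω in Etr A m false, W ω ∂P)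

/-- `rev j` is the time index `K − 1 − j`; the paper's coefficient `ψ_{j+1}`
multiplies `a(K − (j+1)) = a(rev j)`. -/
def rev (j : Fin K) : Fin K := ⟨K - 1 - (j : ℕ), by have := j.isLt; omega⟩

/-- `θ^(K) = 𝔼[Y^{1_K}] − 𝔼[Y^{0_K}]`. -/
def θKfull (P : Measure Ω) (Ypot : (Fin K → Bool) → Ω → ℝ) : ℝ :=
  (∫ ω, Ypot (fun _ => true) ω ∂P) - ∫ ω, Ypot (fun _ => false) ω ∂P

/-- (A1) consistency. -/
def A1ok (A : Fin K → Ω → Bool) (Y : Ω → ℝ) (Ypot : (Fin K → Bool) → Ω → ℝ) : Prop :=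
  ∀ (a : Fin K → Bool) (ω : Ω), (∀ k, A k ω = a k) → Y ω = Ypot a ω

/-- (A2) sequential exchangeability. -/
def A2ok (P : Measure Ω) (A : Fin K → Ω → Bool) (L : Fin K → Ω → 𝓛)
    (Ypot : (Fin K → Bool) → Ω → ℝ) : Prop :=
  ∀ (t : Fin K) (a : Fin K → Bool) (B : Set ℝ), MeasurableSet B →
    ∀ (av : Bool) (l : Fin K → 𝓛) (b : Fin K → Bool),
      0 < P (Lpast L (t : ℕ) l ∩ Apast A (t : ℕ) b) →
      cP P ({ω | Ypot a ω ∈ B} ∩ {ω | A t ω = av}) (Lpast L (t : ℕ) l ∩ Apast A (t : ℕ) b) =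
        cP P {ω | Ypot a ω ∈ B} (Lpast L (t : ℕ) l ∩ Apast A (t : ℕ) b) *
          cP P {ω | A t ω = av} (Lpast L (t : ℕ) l ∩ Apast A (t : ℕ) b)

/-- (A3) positivity. -/
def A3ok (P : Measure Ω) (A : Fin K → Ω → Bool) (L : Fin K → Ω → 𝓛) : Prop :=
  ∀ (t : Fin K) (av : Bool) (l : Fin K → 𝓛) (b : Fin K → Bool),
    0 < P (Lpast L (t : ℕ) l ∩ Apast A (t : ℕ) b) →
    0 < cP P {ω | A t ω = av} (Lpast L (t : ℕ) l ∩ Apast A (t : ℕ) b)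

/-- The marginal structural model `𝔼[Y^{ā}] = ψ₀ + Σ_{j=1}^K ψ_j a(K−j)`;
here `ψ j` is the paper's `ψ_{j+1}`, the coefficient of `a(K−1−j)`. -/
def MSMeq (P : Measure Ω) (Ypot : (Fin K → Bool) → Ω → ℝ) (ψ0 : ℝ) (ψ : Fin K → ℝ) : Prop :=
  ∀ a : Fin K → Bool,
    (∫ ω, Ypot a ω ∂P) = ψ0 + ∑ j : Fin K, ψ j * (if a (rev j) = true then 1 else 0)

/-- (A5) conditional MSM given the past treatment history `Ā(K−m−1)`. -/
def A5ok (P : Measure Ω) (A : Fin K → Ω → Bool) (Ypot : (Fin K → Bool) → Ω → ℝ)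
    (m : ℕ) : Prop :=
  ∀ b : Fin K → Bool, 0 < P (Apast A (K - m) b) →
    ∃ (φ0 : ℝ) (φ : Fin K → ℝ), ∀ a : Fin K → Bool,
      (∫ ω in Apast A (K - m) b, Ypot a ω ∂P) / (P (Apast A (K - m) b)).toReal =
        φ0 + ∑ j : Fin K, φ j * (if a (rev j) = true then 1 else 0)

/-- `q_{j+1} = P(A(K−1−j)=1 | A̲(K−m)=1_m) − P(A(K−1−j)=1 | A̲(K−m)=0_m)`. -/
def qcoef (P : Measure Ω) (A : Fin K → Ω → Bool) (m : ℕ) (j : Fin K) : ℝ :=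
  cP P {ω | A (rev j) ω = true} (Etr A m true) -
    cP P {ω | A (rev j) ω = true} (Etr A m false)

end

/-!
On the event `Ā = b̄` each of the two weights is a factor depending on `b̄` alone divided by the
product of the propensities `P(A(k) = b(k) | L̄(k), Ā(k−1))` for `k ≥ s`, with `s = 0` for
`W_sw` and `s = K − m` for `W_rsw`; the factor telescopes to `P(Ā = b̄)`, resp.
`P(A̲(K−m) = b̄)`. Peeling off one time step at a time with sequential exchangeability and
positivity (inverse probability weighting), the weighted integral of `Y = Y^{b̄}` over `Ā = b̄`
becomes the integral of `Y^{b̄}` over `Ā(s−1) = b̄`. With the MSM this gives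
`θ_sw = Σ_j ψ_j q_j`, where `q_j = 1` for `j ≤ m`. For `θ_rsw`, (A5) makes the effect of switching
the last `m` treatments within a stratum of `Ā(K−m−1)` equal to the effect after an all-zero
past, so averaging over the strata gives `θ_rsw = Σ_{j ≤ m} ψ_j`. As `θ^(K) = Σ_j ψ_j`, the two
errors are `−Σ_{j > m} ψ_j (1 − q_j)` and `−Σ_{j > m} ψ_j`, and `0 < q_j < 1` together with
the common sign of the `ψ_j` compares them.
-/

noncomputable section

section Events

variable {Ω : Type*} {𝓛 : Type*} {K : ℕ}
  {A : Fin K → Ω → Bool} {L : Fin K → Ω → 𝓛}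

lemma measurableSet_A_eq [MeasurableSpace Ω] (hA : ∀ k, Measurable (A k)) (k : Fin K)
    (x : Bool) : MeasurableSet {ω | A k ω = x} :=
  hA k (measurableSet_singleton x)

lemma measurableSet_Apast [MeasurableSpace Ω] (hA : ∀ k, Measurable (A k)) (t : ℕ)
    (b : Fin K → Bool) : MeasurableSet (Apast A t b) := by
  simp only [Apast, Set.ofPred_forall]
  exact .iInter fun k => .iInter fun _ => measurableSet_A_eq hA k _

lemma measurableSet_Lpast [MeasurableSpace Ω] [MeasurableSpace 𝓛] [MeasurableSingletonClass 𝓛]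
    (hL : ∀ k, Measurable (L k)) (t : ℕ) (l : Fin K → 𝓛) :
    MeasurableSet (Lpast L t l) := by
  simp only [Lpast, Set.ofPred_forall]
  exact .iInter fun k => .iInter fun _ => hL k (measurableSet_singleton _)

lemma Apast_zero (b : Fin K → Bool) : Apast A 0 b = Set.univ := by
  ext ω; simp [Apast]

lemma Apast_succ (k : Fin K) (b : Fin K → Bool) :
    Apast A (k + 1) b = Apast A k b ∩ {ω | A k ω = b k} := by
  ext ω
  simp only [Apast, Set.mem_inter_iff, Set.mem_ofPred_eq]
  refine ⟨fun h => ⟨fun j hj => h j (by omega), h k (by omega)⟩, fun ⟨h, hk⟩ j hj => ?_⟩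
  rcases (Nat.lt_succ_iff_lt_or_eq.mp hj) with hj | hj
  · exact h j hj
  · rwa [Fin.ext hj]

lemma Apast_eq_Aseg_zero (t : ℕ) (b : Fin K → Bool) : Apast A t b = Aseg A 0 t b := by
  ext ω; simp [Apast, Aseg]

lemma Aseg_succ {s : ℕ} {k : Fin K} (hs : s ≤ k) (b : Fin K → Bool) :
    Aseg A s (k + 1) b = Aseg A s k b ∩ {ω | A k ω = b k} := by
  ext ω
  simp only [Aseg, Set.mem_inter_iff, Set.mem_ofPred_eq]
  refine ⟨fun h => ⟨fun j hsj hj => h j hsj (by omega), h k hs (by omega)⟩,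
    fun ⟨h, hk⟩ j hsj hj => ?_⟩
  rcases (Nat.lt_succ_iff_lt_or_eq.mp hj) with hj | hj
  · exact h j hsj hj
  · rwa [Fin.ext hj]

lemma Aseg_of_le {s t : ℕ} (hts : t ≤ s) (b : Fin K → Bool) : Aseg A s t b = Set.univ := by
  ext ω; simp only [Aseg, Set.mem_ofPred_eq, Set.mem_univ, iff_true]; intro k h1 h2; omega

lemma Lpast_eq_of_mem {t : ℕ} {l : Fin K → 𝓛} {ω : Ω} (hω : ω ∈ Lpast L t l) {k : ℕ}
    (hk : k ≤ t) : Lpast L k (fun j => L j ω) = Lpast L k l := by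
  ext ω'
  simp only [Lpast, Set.mem_ofPred_eq]
  exact forall_congr' fun j => imp_congr_right fun hj => by rw [hω j (by omega)]

/-- The image of `truncate t` indexes the atoms `L̄(t) = l̄(t)`, each exactly once. -/
def truncate [Nonempty 𝓛] (t : ℕ) (l : Fin K → 𝓛) : Fin K → 𝓛 :=
  fun k => if (k : ℕ) ≤ t then l k else Classical.arbitrary 𝓛

lemma preimage_truncate_singleton [Nonempty 𝓛] (t : ℕ) (l : Fin K → 𝓛) :
    (fun ω => truncate t fun j => L j ω) ⁻¹' {truncate t l} = Lpast L t l := by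
  ext ω
  simp only [Set.mem_preimage, Set.mem_singleton_iff, funext_iff, truncate, Lpast,
    Set.mem_ofPred_eq]
  exact forall_congr' fun k => by by_cases hk : (k : ℕ) ≤ t <;> simp [hk]

lemma Lpast_truncate [Nonempty 𝓛] (t : ℕ) (l : Fin K → 𝓛) :
    Lpast L t (truncate t l) = Lpast L t l := by
  ext ω
  simp only [Lpast, truncate, Set.mem_ofPred_eq]
  exact forall_congr' fun k => imp_congr_right fun hk => by rw [if_pos hk]

end Events

section Histories

variable {Ω : Type*} {K : ℕ} {A : Fin K → Ω → Bool}

def Ahist (A : Fin K → Ω → Bool) (ω : Ω) : Fin K → Bool := fun k => A k ω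

def tailEq (K m : ℕ) (a : Bool) : Finset (Fin K → Bool) :=
  univ.filter fun b => ∀ k : Fin K, K - m ≤ (k : ℕ) → b k = a

def withTail (m : ℕ) (b : Fin K → Bool) (a : Bool) : Fin K → Bool :=
  fun k => if K - m ≤ (k : ℕ) then a else b k

def timeIco (K s t : ℕ) : Finset (Fin K) := univ.filter fun k : Fin K => s ≤ k ∧ (k : ℕ) < t

variable {m : ℕ} {a : Bool} {b : Fin K → Bool}

lemma mem_tailEq : b ∈ tailEq K m a ↔ ∀ k : Fin K, K - m ≤ (k : ℕ) → b k = a := by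
  simp [tailEq]

lemma withTail_mem_tailEq : withTail m b a ∈ tailEq K m a :=
  mem_tailEq.2 fun k hk => by simp [withTail, hk]

lemma withTail_eq_self (hb : b ∈ tailEq K m a) : withTail m b a = b := by
  funext k; by_cases hk : K - m ≤ (k : ℕ) <;> simp [withTail, hk, mem_tailEq.1 hb k]

lemma withTail_withTail (a' : Bool) : withTail m (withTail m b a) a' = withTail m b a' := by
  funext k; by_cases hk : K - m ≤ (k : ℕ) <;> simp [withTail, hk]

lemma preimage_Ahist_singleton : Ahist A ⁻¹' {b} = Apast A K b := by
  ext ω; simp [Ahist, Apast, funext_iff]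

lemma preimage_Ahist_tailEq : Ahist A ⁻¹' ↑(tailEq K m a) = Etr A m a := by
  ext ω; simp [Ahist, tailEq, Etr, EtrV]

lemma preimage_withTail_Ahist_singleton (hb : b ∈ tailEq K m a) :
    (fun ω => withTail m (Ahist A ω) a) ⁻¹' {b} = Apast A (K - m) b := by
  ext ω
  simp only [Set.mem_preimage, Set.mem_singleton_iff, funext_iff, withTail, Ahist, Apast,
    Set.mem_ofPred_eq]
  refine forall_congr' fun k => ?_
  by_cases hk : K - m ≤ (k : ℕ)
  · simp [hk, mem_tailEq.1 hb k hk, Nat.not_lt.2 hk]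
  · simp [hk, Nat.lt_of_not_le hk]

lemma Apast_withTail : Apast A (K - m) (withTail m b a) = Apast A (K - m) b := by
  ext ω
  simp only [Apast, withTail, Set.mem_ofPred_eq]
  exact forall_congr' fun k => imp_congr_right fun hk => by rw [if_neg (by omega)]

lemma Aseg_eq_Etr (hb : b ∈ tailEq K m a) : Aseg A (K - m) K b = Etr A m a := by
  ext ω
  simp only [Aseg, Etr, EtrV, Set.mem_ofPred_eq]
  exact forall_congr' fun k => by
    simp only [k.isLt, forall_const]
    exact imp_congr_right fun hk => by rw [mem_tailEq.1 hb k hk]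

lemma le_rev_iff (j : Fin K) : K - m ≤ (rev j : ℕ) ↔ (j : ℕ) < m := by
  simp only [rev]; omega

lemma timeIco_of_le {s t : ℕ} (hts : t ≤ s) : timeIco K s t = ∅ := by
  ext k; simp only [timeIco, mem_filter, mem_univ, true_and, notMem_empty, iff_false]; omega

lemma timeIco_succ {s : ℕ} {k : Fin K} (hs : s ≤ k) :
    timeIco K s (k + 1) = insert k (timeIco K s k) := by
  ext j; simp only [timeIco, mem_filter, mem_univ, true_and, mem_insert, Fin.ext_iff]; omega

lemma timeIco_zero_right : timeIco K 0 K = univ := by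
  ext k; simp [timeIco]

lemma timeIco_right (s : ℕ) : timeIco K s K = univ.filter fun k : Fin K => s ≤ k := by
  ext k; simp [timeIco]

end Histories

section Partition

variable {α β E : Type*} [MeasurableSpace α] [NormedAddCommGroup E] [NormedSpace ℝ E]
  {μ : Measure α} {f : α → E}

lemma setIntegral_preimage_finset (X : α → β) (s : Finset β)
    (hX : ∀ y ∈ s, MeasurableSet (X ⁻¹' {y})) (hf : ∀ y ∈ s, IntegrableOn f (X ⁻¹' {y}) μ) :
    ∫ x in X ⁻¹' s, f x ∂μ = ∑ y ∈ s, ∫ x in X ⁻¹' {y}, f x ∂μ := by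
  rw [← Finset.set_biUnion_preimage_singleton]
  exact integral_biUnion_finset s hX (Set.pairwiseDisjoint_fiber X s) hf

lemma _root_.MeasureTheory.Integrable.div_comp_finite [Finite β] [MeasurableSpace β]
    [MeasurableSingletonClass β] {X : α → β} (hX : Measurable X) {g : α → ℝ}
    (hg : Integrable g μ) (φ : β → ℝ) :
    Integrable (fun x => g x / φ (X x)) μ := by
  obtain ⟨C, hC⟩ := (Set.finite_range fun y => ‖(φ y)⁻¹‖).bddAbove
  simp only [div_eq_mul_inv]
  exact hg.mul_bdd ((measurable_of_finite fun y => (φ y)⁻¹).comp hX).aestronglyMeasurable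
    (.of_forall fun x => hC ⟨X x, rfl⟩)

end Partition

section CondProb

variable {Ω : Type*} [MeasurableSpace Ω] {𝓛 : Type*} {K : ℕ}
  {A : Fin K → Ω → Bool} {L : Fin K → Ω → 𝓛} (P : Measure Ω)

lemma cP_nonneg (E F : Set Ω) : 0 ≤ cP P E F := by unfold cP; positivity

lemma cP_of_measure_eq_zero (E : Set Ω) {F : Set Ω} (h : P F = 0) : cP P E F = 0 := by
  simp [cP, h]

lemma cP_mul_toReal [IsFiniteMeasure P] (E : Set Ω) {F : Set Ω} (h : P F ≠ 0) :
    cP P E F * (P F).toReal = (P (E ∩ F)).toReal :=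
  div_mul_cancel₀ _ (ENNReal.toReal_ne_zero.2 ⟨h, measure_ne_top P F⟩)

lemma prod_cP_Aseg [IsProbabilityMeasure P] (s : ℕ) (b : Fin K → Bool) :
    ∏ k ∈ univ.filter (fun k : Fin K => s ≤ k), cP P {ω | A k ω = b k} (Aseg A s k b) =
      (P (Aseg A s K b)).toReal := by
  rw [← timeIco_right]
  suffices h : ∀ t ≤ K, ∏ k ∈ timeIco K s t, cP P {ω | A k ω = b k} (Aseg A s k b) =
      (P (Aseg A s t b)).toReal from h K le_rfl
  intro t ht
  induction t with
  | zero => simp [timeIco_of_le, Aseg_of_le]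
  | succ t ih =>
    by_cases hts : t + 1 ≤ s
    · simp [timeIco_of_le hts, Aseg_of_le hts]
    let k : Fin K := ⟨t, by omega⟩
    have hk : s ≤ (k : ℕ) := by simp only [k]; omega
    rw [show t + 1 = (k : ℕ) + 1 from rfl, timeIco_succ hk, prod_insert (by simp [timeIco]),
      ih (by omega), Aseg_succ hk, Set.inter_comm]
    by_cases h0 : P (Aseg A s k b) = 0
    · simp [cP_of_measure_eq_zero P _ h0, measure_mono_null Set.inter_subset_right h0]
    · exact cP_mul_toReal P _ h0

/-- Integral form of sequential exchangeability for a single outcome `f`. -/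
def MeanExchangeable (P : Measure Ω) (A : Fin K → Ω → Bool) (L : Fin K → Ω → 𝓛)
    (f : Ω → ℝ) : Prop :=
  ∀ (t : Fin K) (av : Bool) (l : Fin K → 𝓛) (b : Fin K → Bool),
    ∫ ω in Lpast L t l ∩ Apast A t b ∩ {ω | A t ω = av}, f ω ∂P =
      cP P {ω | A t ω = av} (Lpast L t l ∩ Apast A t b) *
        ∫ ω in Lpast L t l ∩ Apast A t b, f ω ∂P

lemma meanExchangeable_one [IsFiniteMeasure P] : MeanExchangeable P A L fun _ => 1 := by
  intro t av l b
  by_cases h0 : P (Lpast L t l ∩ Apast A t b) = 0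
  · simp [cP_of_measure_eq_zero P _ h0, measureReal_def,
      measure_mono_null Set.inter_subset_left h0]
  · rw [setIntegral_const, setIntegral_const, smul_eq_mul, smul_eq_mul, mul_one, mul_one,
      measureReal_def, measureReal_def, cP_mul_toReal P _ h0, Set.inter_comm]

lemma A2ok.meanExchangeable [IsFiniteMeasure P] {Ypot : (Fin K → Bool) → Ω → ℝ}
    (hA2 : A2ok P A L Ypot) {a : Fin K → Bool} (hY : Measurable (Ypot a)) :
    MeanExchangeable P A L (Ypot a) := by
  intro t av l b
  set C := Lpast L t l ∩ Apast A t b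
  set E := {ω | A t ω = av}
  by_cases h0 : P C = 0
  · rw [cP_of_measure_eq_zero P _ h0, zero_mul,
      Measure.restrict_eq_zero.2 (measure_mono_null Set.inter_subset_left h0),
      integral_zero_measure]
  -- (A2) says that the law of `Ypot a` on `C ∩ E` is `P(E | C)` times its law on `C`.
  have hlaw : (P.restrict (C ∩ E)).map (Ypot a) =
      ENNReal.ofReal (cP P E C) • (P.restrict C).map (Ypot a) := by
    ext B hB
    have key : (P (({ω | Ypot a ω ∈ B} ∩ E) ∩ C)).toReal =
        cP P E C * (P ({ω | Ypot a ω ∈ B} ∩ C)).toReal := by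
      rw [← cP_mul_toReal P _ h0, hA2 t a B hB av l b (pos_iff_ne_zero.2 h0),
        ← cP_mul_toReal P _ h0]
      ring
    rw [Measure.map_apply hY hB, Measure.smul_apply, Measure.map_apply hY hB,
      Measure.restrict_apply (hY hB), Measure.restrict_apply (hY hB), smul_eq_mul,
      ← ENNReal.toReal_eq_toReal_iff' (measure_ne_top _ _) (by finiteness),
      ENNReal.toReal_mul, ENNReal.toReal_ofReal (cP_nonneg P E C)]
    convert key using 3
    · ext ω; simp only [Set.mem_inter_iff, Set.mem_preimage, Set.mem_ofPred_eq]; tauto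
    · rfl
  calc ∫ ω in C ∩ E, Ypot a ω ∂P = ∫ y, y ∂(P.restrict (C ∩ E)).map (Ypot a) :=
        (integral_map (f := fun y => y) hY.aemeasurable aestronglyMeasurable_id).symm
    _ = cP P E C * ∫ ω in C, Ypot a ω ∂P := by
        rw [hlaw, integral_smul_measure, ENNReal.toReal_ofReal (cP_nonneg P E C), smul_eq_mul,
          integral_map (f := fun y => y) hY.aemeasurable aestronglyMeasurable_id]

end CondProb

section InverseProbabilityWeighting

variable {Ω : Type*} [MeasurableSpace Ω] {𝓛 : Type*} {K : ℕ} {A : Fin K → Ω → Bool}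
  {L : Fin K → Ω → 𝓛} {P : Measure Ω}

/-- `P(A(k) = b(k) | L̄(k) = l̄(k), Ā(k−1) = b̄(k−1))`. -/
def propensity (P : Measure Ω) (A : Fin K → Ω → Bool) (L : Fin K → Ω → 𝓛)
    (b : Fin K → Bool) (k : Fin K) (l : Fin K → 𝓛) : ℝ :=
  cP P {ω | A k ω = b k} (Lpast L k l ∩ Apast A k b)

def propensityProd (P : Measure Ω) (A : Fin K → Ω → Bool) (L : Fin K → Ω → 𝓛)
    (b : Fin K → Bool) (s t : ℕ) (l : Fin K → 𝓛) : ℝ :=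
  ∏ k ∈ timeIco K s t, propensity P A L b k l

lemma propensityProd_succ {b : Fin K → Bool} {s : ℕ} {k : Fin K} (hs : s ≤ k)
    (l : Fin K → 𝓛) :
    propensityProd P A L b s (k + 1) l = propensityProd P A L b s k l * propensity P A L b k l := by
  rw [propensityProd, timeIco_succ hs, prod_insert (by simp [timeIco]), mul_comm]
  rfl

lemma propensityProd_eq_of_mem {b : Fin K → Bool} {s t u : ℕ} {l : Fin K → 𝓛} {ω : Ω}
    (hω : ω ∈ Lpast L t l) (hu : u ≤ t + 1) :
    propensityProd P A L b s u (fun j => L j ω) = propensityProd P A L b s u l :=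
  prod_congr rfl fun k hk => by
    simp only [timeIco, mem_filter, mem_univ, true_and] at hk
    rw [propensity, propensity, Lpast_eq_of_mem hω (by omega)]

variable [MeasurableSpace 𝓛] [MeasurableSingletonClass 𝓛] [Fintype 𝓛] [Nonempty 𝓛]

lemma setIntegral_eq_sum_Lpast (hL : ∀ k, Measurable (L k)) (t : ℕ)
    (S : Set Ω) {g : Ω → ℝ} (hg : IntegrableOn g S P) :
    ∫ ω in S, g ω ∂P = ∑ y ∈ univ.image (truncate t), ∫ ω in Lpast L t y ∩ S, g ω ∂P := by
  set X : Ω → Fin K → 𝓛 := fun ω => truncate t fun j => L j ω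
  set R : Finset (Fin K → 𝓛) := univ.image (truncate t)
  have hfiber : ∀ y ∈ R, X ⁻¹' {y} = Lpast L t y := by
    intro y hy
    obtain ⟨l, -, rfl⟩ := mem_image.1 hy
    rw [preimage_truncate_singleton, Lpast_truncate]
  have hcover : X ⁻¹' R = Set.univ := Set.eq_univ_of_forall fun ω => by simp [X, R]
  calc ∫ ω in S, g ω ∂P = ∫ ω in X ⁻¹' R, g ω ∂P.restrict S := by
        rw [hcover, Measure.restrict_univ]
    _ = ∑ y ∈ R, ∫ ω in X ⁻¹' {y}, g ω ∂P.restrict S :=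
        setIntegral_preimage_finset X _
          (fun y hy => hfiber y hy ▸ measurableSet_Lpast hL t y) fun _ _ => hg.integrableOn
    _ = _ := sum_congr rfl fun y hy => by
        rw [hfiber y hy, Measure.restrict_restrict (measurableSet_Lpast hL t y)]

variable (hA : ∀ k, Measurable (A k))
  (hL : ∀ k, Measurable (L k)) (hA3 : A3ok P A L) {f : Ω → ℝ} (hf : Integrable f P)
  (hexch : MeanExchangeable P A L f) (b : Fin K → Bool)
include hA hL hA3 hf hexch

lemma setIntegral_Apast_succ_div_propensityProd {s : ℕ} {k : Fin K} (hs : s ≤ k) :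
    ∫ ω in Apast A (k + 1) b, f ω / propensityProd P A L b s (k + 1) (fun j => L j ω) ∂P =
      ∫ ω in Apast A k b, f ω / propensityProd P A L b s k (fun j => L j ω) ∂P := by
  have hint : ∀ u, Integrable (fun ω => f ω / propensityProd P A L b s u fun j => L j ω) P :=
    fun u => hf.div_comp_finite (measurable_pi_lambda _ hL) _
  rw [setIntegral_eq_sum_Lpast hL k _ (hint _).integrableOn,
    setIntegral_eq_sum_Lpast hL k _ (hint _).integrableOn]
  refine sum_congr rfl fun l _ => ?_
  -- On the atom `C = {L̄(k) = l̄, Ā(k−1) = b̄}` both weights are constant, and mean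
  -- exchangeability pulls out of `∫_{C ∩ {A(k) = b(k)}}` exactly the new propensity factor.
  have hC : MeasurableSet (Lpast L k l ∩ Apast A k b) :=
    (measurableSet_Lpast hL k l).inter (measurableSet_Apast hA k b)
  rw [Apast_succ, ← Set.inter_assoc,
    setIntegral_congr_fun (hC.inter (measurableSet_A_eq hA k _))
      fun ω hω => by rw [propensityProd_eq_of_mem hω.1.1 le_rfl],
    setIntegral_congr_fun hC fun ω hω => by rw [propensityProd_eq_of_mem hω.1 (by omega)],
    integral_div, integral_div, hexch k (b k) l b, propensityProd_succ hs]
  by_cases h0 : P (Lpast L k l ∩ Apast A k b) = 0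
  · simp [Measure.restrict_eq_zero.2 h0]
  · have hd : propensity P A L b k l ≠ 0 := (hA3 k (b k) l b (pos_iff_ne_zero.2 h0)).ne'
    rw [← propensity, mul_comm (propensityProd P A L b s k l), ← div_div,
      mul_div_cancel_left₀ _ hd]

theorem setIntegral_Apast_div_propensityProd {s t : ℕ} (hst : s ≤ t) (htK : t ≤ K) :
    ∫ ω in Apast A t b, f ω / propensityProd P A L b s t (fun j => L j ω) ∂P =
      ∫ ω in Apast A s b, f ω ∂P := by
  induction t, hst using Nat.le_induction with
  | base => simp [propensityProd, timeIco_of_le le_rfl]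
  | succ t hst ih =>
    rw [show t + 1 = ((⟨t, by omega⟩ : Fin K) : ℕ) + 1 from rfl,
      setIntegral_Apast_succ_div_propensityProd hA hL hA3 hf hexch b hst]
    exact ih (by omega)

end InverseProbabilityWeighting

section Weights

variable {Ω : Type*} [MeasurableSpace Ω] {𝓛 : Type*} {K : ℕ} {A : Fin K → Ω → Bool}
  {L : Fin K → Ω → 𝓛} {P : Measure Ω} [IsProbabilityMeasure P] {b : Fin K → Bool} {ω : Ω}

lemma Wsw_eq_of_mem_Apast (hω : ω ∈ Apast A K b) :
    Wsw P A L ω = (P (Apast A K b)).toReal / propensityProd P A L b 0 K fun j => L j ω := by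
  have hAω : ∀ k, A k ω = b k := fun k => hω k k.isLt
  have hnum : ∏ k : Fin K, cP P {ω' | A k ω' = b k} (Apast A k b) = (P (Apast A K b)).toReal := by
    simp only [Apast_eq_Aseg_zero, ← prod_cP_Aseg P 0 b, Nat.zero_le, filter_true]
  simp only [Wsw, hAω]
  rw [prod_div_distrib, hnum, propensityProd, timeIco_zero_right]
  rfl

lemma Wrsw_eq_of_mem_Apast (m : ℕ) (hω : ω ∈ Apast A K b) :
    Wrsw P A L m ω =
      (P (Aseg A (K - m) K b)).toReal / propensityProd P A L b (K - m) K fun j => L j ω := by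
  have hAω : ∀ k, A k ω = b k := fun k => hω k k.isLt
  simp only [Wrsw, hAω]
  rw [prod_div_distrib, prod_cP_Aseg, propensityProd, timeIco_right]
  rfl

end Weights

section Decomposition

variable {Ω : Type*} [MeasurableSpace Ω] {𝓛 : Type*} [MeasurableSpace 𝓛] [Fintype 𝓛]
  [MeasurableSingletonClass 𝓛] [Nonempty 𝓛] {K : ℕ} {A : Fin K → Ω → Bool}
  {L : Fin K → Ω → 𝓛} {P : Measure Ω}

lemma sum_toReal_Apast [IsFiniteMeasure P] (hA : ∀ k, Measurable (A k))
    (s : Finset (Fin K → Bool)) :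
    ∑ b ∈ s, (P (Apast A K b)).toReal = (P (Ahist A ⁻¹' s)).toReal := by
  simp only [← measureReal_def, ← preimage_Ahist_singleton]
  exact sum_measureReal_preimage_singleton s fun b _ =>
    preimage_Ahist_singleton (A := A) ▸ measurableSet_Apast hA K b

lemma sum_setIntegral_Apast_tailEq (hA : ∀ k, Measurable (A k)) {f : Ω → ℝ}
    (hf : Integrable f P) (m : ℕ) (a : Bool) :
    ∑ b ∈ tailEq K m a, ∫ ω in Apast A (K - m) b, f ω ∂P = ∫ ω, f ω ∂P := by
  have hcover : (fun ω => withTail m (Ahist A ω) a) ⁻¹' ↑(tailEq K m a) = Set.univ :=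
    Set.eq_univ_of_forall fun ω => withTail_mem_tailEq
  rw [← setIntegral_univ, ← hcover, setIntegral_preimage_finset _ _
    (fun b hb => preimage_withTail_Ahist_singleton hb ▸ measurableSet_Apast hA _ b)
    fun _ _ => hf.integrableOn]
  exact sum_congr rfl fun b hb => by rw [preimage_withTail_Ahist_singleton hb]

lemma setIntegral_Etr_mul_eq_sum (hA : ∀ k, Measurable (A k)) (hL : ∀ k, Measurable (L k))
    (hA3 : A3ok P A L) {s : ℕ} (hs : s ≤ K) {W : Ω → ℝ} {N : (Fin K → Bool) → ℝ}
    (hW : ∀ b, ∀ ω ∈ Apast A K b, W ω = N b / propensityProd P A L b s K fun j => L j ω)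
    {Y : Ω → ℝ} {Ypot : (Fin K → Bool) → Ω → ℝ} (hA1 : A1ok A Y Ypot)
    (hint : ∀ b, Integrable (Ypot b) P) (hexch : ∀ b, MeanExchangeable P A L (Ypot b))
    (m : ℕ) (a : Bool) :
    ∫ ω in Etr A m a, W ω * Y ω ∂P =
      ∑ b ∈ tailEq K m a, N b * ∫ ω in Apast A s b, Ypot b ω ∂P := by
  have hrepr : ∀ b, ∀ ω ∈ Apast A K b,
      W ω * Y ω = N b * (Ypot b ω / propensityProd P A L b s K fun j => L j ω) := by
    intro b ω hω
    rw [hW b ω hω, hA1 b ω fun k => hω k k.isLt]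
    ring
  rw [← preimage_Ahist_tailEq, setIntegral_preimage_finset (Ahist A) _
    (fun b _ => preimage_Ahist_singleton (A := A) ▸ measurableSet_Apast hA K b)]
  · refine sum_congr rfl fun b _ => ?_
    rw [preimage_Ahist_singleton, setIntegral_congr_fun (measurableSet_Apast hA K b) (hrepr b),
      integral_const_mul,
      setIntegral_Apast_div_propensityProd hA hL hA3 (hint b) (hexch b) b hs le_rfl]
  · intro b _
    rw [preimage_Ahist_singleton]
    exact (((hint b).div_comp_finite (measurable_pi_lambda _ hL) _).const_mul
      (N b)).integrableOn.congr_fun (fun ω hω => (hrepr b ω hω).symm)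
      (measurableSet_Apast hA K b)

end Decomposition

section Estimands

variable {Ω : Type*} [MeasurableSpace Ω] {𝓛 : Type*} [MeasurableSpace 𝓛] [Fintype 𝓛]
  [MeasurableSingletonClass 𝓛] [Nonempty 𝓛] {K m : ℕ} {A : Fin K → Ω → Bool}
  {L : Fin K → Ω → 𝓛} {P : Measure Ω} {Y : Ω → ℝ} {Ypot : (Fin K → Bool) → Ω → ℝ} {ψ0 : ℝ}
  {ψ : Fin K → ℝ}

lemma θKfull_eq (hMSM : MSMeq P Ypot ψ0 ψ) : θKfull P Ypot = ∑ j, ψ j := by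
  rw [θKfull, hMSM, hMSM]
  simp

lemma qcoef_eq_one [IsFiniteMeasure P] (hpos : P (Etr A m true) ≠ 0) {j : Fin K}
    (hj : (j : ℕ) < m) :
    qcoef P A m j = 1 := by
  have hmem : ∀ a, ∀ ω ∈ Etr A m a, A (rev j) ω = a := fun a ω hω =>
    hω (rev j) ((le_rev_iff j).2 hj)
  have h1 : {ω | A (rev j) ω = true} ∩ Etr A m true = Etr A m true :=
    Set.inter_eq_right.2 (hmem true)
  have h0 : {ω | A (rev j) ω = true} ∩ Etr A m false = ∅ :=
    Set.eq_empty_of_forall_notMem fun ω hω => by simp [hmem false ω hω.2] at hω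
  rw [qcoef, cP, cP, h1, h0, div_self (ENNReal.toReal_ne_zero.2 ⟨hpos, measure_ne_top _ _⟩)]
  simp

variable [IsProbabilityMeasure P] (hA : ∀ k, Measurable (A k)) (hL : ∀ k, Measurable (L k))
  (hYpm : ∀ a, Measurable (Ypot a)) (hYpi : ∀ a, Integrable (Ypot a) P)
  (hA1 : A1ok A Y Ypot) (hA2 : A2ok P A L Ypot) (hA3 : A3ok P A L)
include hA hL hA3

lemma setIntegral_Etr_Wsw (a : Bool) :
    ∫ ω in Etr A m a, Wsw P A L ω ∂P = (P (Etr A m a)).toReal := by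
  have h := setIntegral_Etr_mul_eq_sum hA hL hA3 (Nat.zero_le K)
    (fun b _ hω => Wsw_eq_of_mem_Apast hω) (Y := fun _ => 1) (Ypot := fun _ _ => 1)
    (fun _ _ _ => rfl) (fun _ => integrable_const 1) (fun _ => meanExchangeable_one P) m a
  simp only [mul_one, Apast_zero, setIntegral_const, probReal_univ, smul_eq_mul] at h
  rw [h, sum_toReal_Apast hA, preimage_Ahist_tailEq]

include hYpm hYpi hA1 hA2

lemma setIntegral_Etr_Wsw_mul (hMSM : MSMeq P Ypot ψ0 ψ) (a : Bool) :
    ∫ ω in Etr A m a, Wsw P A L ω * Y ω ∂P =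
      ψ0 * (P (Etr A m a)).toReal +
        ∑ j, ψ j * (P ({ω | A (rev j) ω = true} ∩ Etr A m a)).toReal := by
  have hcount : ∀ k, ∑ b ∈ tailEq K m a, (P (Apast A K b)).toReal * (if b k = true then 1 else 0)
      = (P ({ω | A k ω = true} ∩ Etr A m a)).toReal := by
    intro k
    simp only [mul_ite, mul_one, mul_zero, ← sum_filter, sum_toReal_Apast hA]
    congr 2
    ext ω
    simp [Ahist, tailEq, Etr, EtrV, and_comm]
  rw [setIntegral_Etr_mul_eq_sum hA hL hA3 (Nat.zero_le K)
    (fun b _ hω => Wsw_eq_of_mem_Apast hω) hA1 hYpi (fun b => hA2.meanExchangeable P (hYpm b))]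
  calc ∑ b ∈ tailEq K m a, (P (Apast A K b)).toReal * ∫ ω in Apast A 0 b, Ypot b ω ∂P
      = ∑ b ∈ tailEq K m a, (ψ0 * (P (Apast A K b)).toReal +
          ∑ j, ψ j * ((P (Apast A K b)).toReal * if b (rev j) = true then 1 else 0)) :=
        sum_congr rfl fun b _ => by
          rw [Apast_zero, Measure.restrict_univ, hMSM b, mul_add, mul_sum, mul_comm ψ0]
          congr 1
          exact sum_congr rfl fun j _ => by ring
    _ = _ := by
        rw [sum_add_distrib, ← mul_sum, sum_comm, sum_toReal_Apast hA, preimage_Ahist_tailEq]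
        simp only [← mul_sum, hcount]

lemma θW_Wsw (hMSM : MSMeq P Ypot ψ0 ψ) (hpos1 : P (Etr A m true) ≠ 0)
    (hpos0 : P (Etr A m false) ≠ 0) :
    θW P A m (Wsw P A L) Y = ∑ j, ψ j * qcoef P A m j := by
  have hratio : ∀ a, P (Etr A m a) ≠ 0 →
      (∫ ω in Etr A m a, Wsw P A L ω * Y ω ∂P) / ∫ ω in Etr A m a, Wsw P A L ω ∂P =
        ψ0 + ∑ j, ψ j * cP P {ω | A (rev j) ω = true} (Etr A m a) := by
    intro a ha
    have hX : (P (Etr A m a)).toReal ≠ 0 := ENNReal.toReal_ne_zero.2 ⟨ha, measure_ne_top _ _⟩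
    rw [setIntegral_Etr_Wsw_mul hA hL hYpm hYpi hA1 hA2 hA3 hMSM, setIntegral_Etr_Wsw hA hL hA3,
      add_div, mul_div_cancel_right₀ _ hX, sum_div]
    simp only [cP, mul_div_assoc]
  rw [θW, hratio true hpos1, hratio false hpos0]
  simp only [qcoef, mul_sub, sum_sub_distrib]
  ring

end Estimands

section Restricted

variable {Ω : Type*} [MeasurableSpace Ω] {𝓛 : Type*} [MeasurableSpace 𝓛] [Fintype 𝓛]
  [MeasurableSingletonClass 𝓛] [Nonempty 𝓛] {K m : ℕ} {A : Fin K → Ω → Bool}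
  {L : Fin K → Ω → 𝓛} {P : Measure Ω} [IsProbabilityMeasure P] {Y : Ω → ℝ}
  {Ypot : (Fin K → Bool) → Ω → ℝ} {ψ0 : ℝ} {ψ : Fin K → ℝ}

lemma sum_tailEq_withTail {M : Type*} [AddCommMonoid M] (F : (Fin K → Bool) → M)
    (a a' : Bool) : ∑ b ∈ tailEq K m a, F b = ∑ b ∈ tailEq K m a', F (withTail m b a) :=
  sum_nbij' (withTail m · a') (withTail m · a) (fun _ _ => withTail_mem_tailEq)
    (fun _ _ => withTail_mem_tailEq) (fun b hb => by rw [withTail_withTail, withTail_eq_self hb])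
    (fun b hb => by rw [withTail_withTail, withTail_eq_self hb])
    (fun b hb => by rw [withTail_withTail, withTail_eq_self hb])

lemma A5ok.setIntegral_sub_eq (hA5 : A5ok P A Ypot m) (b : Fin K → Bool)
    {x y x' y' : Fin K → Bool}
    (hxy : ∀ k, ((if x k = true then 1 else 0) - if y k = true then 1 else 0 : ℝ) =
      (if x' k = true then 1 else 0) - if y' k = true then 1 else 0) :
    ∫ ω in Apast A (K - m) b, Ypot x ω ∂P - ∫ ω in Apast A (K - m) b, Ypot y ω ∂P =
      ∫ ω in Apast A (K - m) b, Ypot x' ω ∂P - ∫ ω in Apast A (K - m) b, Ypot y' ω ∂P := by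
  by_cases h0 : P (Apast A (K - m) b) = 0
  · simp [Measure.restrict_eq_zero.2 h0]
  obtain ⟨φ0, φ, hφ⟩ := hA5 b (pos_iff_ne_zero.2 h0)
  have hX : (P (Apast A (K - m) b)).toReal ≠ 0 :=
    ENNReal.toReal_ne_zero.2 ⟨h0, measure_ne_top _ _⟩
  have hlin : ∀ c, ∫ ω in Apast A (K - m) b, Ypot c ω ∂P = (P (Apast A (K - m) b)).toReal *
      (φ0 + ∑ j, φ j * if c (rev j) = true then 1 else 0) := fun c => by
    rw [← hφ c, mul_div_cancel₀ _ hX]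
  simp only [hlin, ← mul_sub, add_sub_add_left_eq_sub, ← sum_sub_distrib, hxy]

variable (hA : ∀ k, Measurable (A k)) (hL : ∀ k, Measurable (L k)) (hA3 : A3ok P A L)
include hA hL hA3

lemma setIntegral_Etr_Wrsw_mul {Y' : Ω → ℝ} {Ypot' : (Fin K → Bool) → Ω → ℝ}
    (hA1 : A1ok A Y' Ypot') (hint : ∀ b, Integrable (Ypot' b) P)
    (hexch : ∀ b, MeanExchangeable P A L (Ypot' b)) (a : Bool) :
    ∫ ω in Etr A m a, Wrsw P A L m ω * Y' ω ∂P =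
      (P (Etr A m a)).toReal * ∑ b ∈ tailEq K m a, ∫ ω in Apast A (K - m) b, Ypot' b ω ∂P := by
  rw [setIntegral_Etr_mul_eq_sum hA hL hA3 (Nat.sub_le K m)
    (fun b _ hω => Wrsw_eq_of_mem_Apast m hω) hA1 hint hexch, mul_sum]
  exact sum_congr rfl fun b hb => by rw [Aseg_eq_Etr hb]

lemma setIntegral_Etr_Wrsw (a : Bool) :
    ∫ ω in Etr A m a, Wrsw P A L m ω ∂P = (P (Etr A m a)).toReal := by
  have h := setIntegral_Etr_Wrsw_mul hA hL hA3 (m := m) (Y' := fun _ => 1) (Ypot' := fun _ _ => 1)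
    (fun _ _ _ => rfl) (fun _ => integrable_const 1) (fun _ => meanExchangeable_one P) a
  rw [sum_setIntegral_Apast_tailEq hA (integrable_const 1)] at h
  simpa using h

variable (hYpm : ∀ a, Measurable (Ypot a)) (hYpi : ∀ a, Integrable (Ypot a) P)
  (hA1 : A1ok A Y Ypot) (hA2 : A2ok P A L Ypot)
include hYpm hYpi hA1 hA2

lemma θW_Wrsw (hMSM : MSMeq P Ypot ψ0 ψ) (hA5 : A5ok P A Ypot m)
    (hpos1 : P (Etr A m true) ≠ 0) (hpos0 : P (Etr A m false) ≠ 0) :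
    θW P A m (Wrsw P A L m) Y = ∑ j, ψ j * if (j : ℕ) < m then 1 else 0 := by
  have hratio : ∀ a, P (Etr A m a) ≠ 0 →
      (∫ ω in Etr A m a, Wrsw P A L m ω * Y ω ∂P) / ∫ ω in Etr A m a, Wrsw P A L m ω ∂P =
        ∑ b ∈ tailEq K m a, ∫ ω in Apast A (K - m) b, Ypot b ω ∂P := by
    intro a ha
    rw [setIntegral_Etr_Wrsw_mul hA hL hA3 hA1 hYpi (fun b => hA2.meanExchangeable P (hYpm b)),
      setIntegral_Etr_Wrsw hA hL hA3, mul_div_cancel_left₀ _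
        (ENNReal.toReal_ne_zero.2 ⟨ha, measure_ne_top _ _⟩)]
  set e : Fin K → Bool := withTail m (fun _ => false) true
  have hswitch : ∀ b ∈ tailEq K m false,
      ∫ ω in Apast A (K - m) b, Ypot (withTail m b true) ω ∂P -
          ∫ ω in Apast A (K - m) b, Ypot b ω ∂P =
        ∫ ω in Apast A (K - m) b, Ypot e ω ∂P -
          ∫ ω in Apast A (K - m) b, Ypot (fun _ => false) ω ∂P :=
    fun b hb => hA5.setIntegral_sub_eq b fun k => by
      by_cases hk : K - m ≤ (k : ℕ) <;> simp [e, withTail, hk, mem_tailEq.1 hb k]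
  rw [θW, hratio true hpos1, hratio false hpos0, sum_tailEq_withTail _ true false,
    ← sum_sub_distrib]
  simp only [Apast_withTail]
  rw [sum_congr rfl hswitch, sum_sub_distrib, sum_setIntegral_Apast_tailEq hA (hYpi _),
    sum_setIntegral_Apast_tailEq hA (hYpi _), hMSM, hMSM]
  simp only [e, withTail, le_rev_iff]
  simp

end Restricted

lemma abs_sum_mul_le_abs_sum_mul {ι : Type*} (s : Finset ι) {ψ c e : ι → ℝ}
    (hψ : (∀ j, 0 ≤ ψ j) ∨ (∀ j, ψ j ≤ 0)) (hc : ∀ j, 0 ≤ c j) (hce : ∀ j, c j ≤ e j) :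
    |∑ j ∈ s, ψ j * c j| ≤ |∑ j ∈ s, ψ j * e j| := by
  rcases hψ with hψ | hψ
  · rw [abs_of_nonneg (sum_nonneg fun j _ => mul_nonneg (hψ j) (hc j)),
      abs_of_nonneg (sum_nonneg fun j _ => mul_nonneg (hψ j) ((hc j).trans (hce j)))]
    exact sum_le_sum fun j _ => mul_le_mul_of_nonneg_left (hce j) (hψ j)
  · rw [abs_of_nonpos (sum_nonpos fun j _ => mul_nonpos_of_nonpos_of_nonneg (hψ j) (hc j)),
      abs_of_nonpos (sum_nonpos fun j _ =>
        mul_nonpos_of_nonpos_of_nonneg (hψ j) ((hc j).trans (hce j)))]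
    exact neg_le_neg (sum_le_sum fun j _ => mul_le_mul_of_nonpos_left (hce j) (hψ j))

end

theorem robustness_inequality_general
    {Ω : Type*} [MeasurableSpace Ω] {𝓛 : Type*} [MeasurableSpace 𝓛]
    [Fintype 𝓛] [Nonempty 𝓛] [MeasurableSingletonClass 𝓛]
    (P : Measure Ω) [IsProbabilityMeasure P]
    {K m : ℕ}
    (A : Fin K → Ω → Bool) (L : Fin K → Ω → 𝓛)
    (hA : ∀ k, Measurable (A k)) (hL : ∀ k, Measurable (L k))
    (Y : Ω → ℝ)
    (Ypot : (Fin K → Bool) → Ω → ℝ)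
    (hYpm : ∀ a, Measurable (Ypot a)) (hYpi : ∀ a, Integrable (Ypot a) P)
    (hpos1 : 0 < P (Etr A m true)) (hpos0 : 0 < P (Etr A m false))
    (hA1 : A1ok A Y Ypot) (hA2 : A2ok P A L Ypot) (hA3 : A3ok P A L)
    (ψ0 : ℝ) (ψ : Fin K → ℝ) (hMSM : MSMeq P Ypot ψ0 ψ)
    (hA4 : (∀ j, 0 ≤ ψ j) ∨ (∀ j, ψ j ≤ 0))
    (hA5 : A5ok P A Ypot m)
    (hA6 : ∀ j : Fin K, m ≤ (j : ℕ) → 0 < qcoef P A m j ∧ qcoef P A m j < 1) :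
    |θW P A m (Wsw P A L) Y - θKfull P Ypot| ≤
      |θW P A m (Wrsw P A L m) Y - θKfull P Ypot| := by
  have hsw : θW P A m (Wsw P A L) Y - θKfull P Ypot = -∑ j, ψ j * (1 - qcoef P A m j) := by
    rw [θW_Wsw hA hL hYpm hYpi hA1 hA2 hA3 hMSM hpos1.ne' hpos0.ne', θKfull_eq hMSM]
    simp [mul_sub, sum_sub_distrib]
  have hrsw : θW P A m (Wrsw P A L m) Y - θKfull P Ypot =
      -∑ j, ψ j * (1 - if (j : ℕ) < m then 1 else 0) := by
    rw [θW_Wrsw hA hL hA3 hYpm hYpi hA1 hA2 hMSM hA5 hpos1.ne' hpos0.ne', θKfull_eq hMSM]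
    simp [mul_sub, sum_sub_distrib]
  have hq : ∀ j, 0 ≤ 1 - qcoef P A m j ∧
      1 - qcoef P A m j ≤ 1 - if (j : ℕ) < m then 1 else 0 := fun j => by
    by_cases hj : (j : ℕ) < m
    · simp [hj, qcoef_eq_one hpos1.ne' hj]
    · have := hA6 j (by omega)
      simp only [hj, if_false]
      constructor <;> linarith
  rw [hsw, hrsw, abs_neg, abs_neg]
  exact abs_sum_mul_le_abs_sum_mul _ hA4 (fun j => (hq j).1) fun j => (hq j).2

/-- Robustness inequality: `|θ_rsw^(m) − θ^(K)| ≥ |θ_sw^(m) − θ^(K)|`. -/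
theorem robustness_inequality
    {Ω : Type*} [MeasurableSpace Ω] {𝓛 : Type*} [MeasurableSpace 𝓛]
    [Fintype 𝓛] [Nonempty 𝓛] [MeasurableSingletonClass 𝓛]
    (P : Measure Ω) [IsProbabilityMeasure P]
    {K m : ℕ} (hK : 1 ≤ K) (hm1 : 1 ≤ m) (hmK : m ≤ K)
    (A : Fin K → Ω → Bool) (L : Fin K → Ω → 𝓛)
    (hA : ∀ k, Measurable (A k)) (hL : ∀ k, Measurable (L k))
    (Y : Ω → ℝ) (hY : Measurable Y)
    (Ypot : (Fin K → Bool) → Ω → ℝ)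
    (hYpm : ∀ a, Measurable (Ypot a)) (hYpi : ∀ a, Integrable (Ypot a) P)
    (hpos1 : 0 < P (Etr A m true)) (hpos0 : 0 < P (Etr A m false))
    (hA1 : A1ok A Y Ypot) (hA2 : A2ok P A L Ypot) (hA3 : A3ok P A L)
    (ψ0 : ℝ) (ψ : Fin K → ℝ) (hMSM : MSMeq P Ypot ψ0 ψ)
    (hA4 : (∀ j, 0 ≤ ψ j) ∨ (∀ j, ψ j ≤ 0))
    (hA5 : A5ok P A Ypot m)
    (hA6 : ∀ j : Fin K, m ≤ (j : ℕ) → 0 < qcoef P A m j ∧ qcoef P A m j < 1) :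
    |θW P A m (Wsw P A L) Y - θKfull P Ypot| ≤
      |θW P A m (Wrsw P A L m) Y - θKfull P Ypot| :=
  robustness_inequality_general P A L hA hL Y Ypot hYpm hYpi hpos1 hpos0 hA1 hA2 hA3 ψ0 ψ hMSM hA4
    hA5 hA6

end MSMPaper
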